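/- If S ⊆ V is a nonempty independent set in G (no edge of G has both endpoints in S) with |S| = m, then there exists a point c ∈ ℝ^E such that Σ_{v∈S} ‖x_v − c‖_∞ = m/2. -/

import Mathlib

open Finset

/-!
Put `c = ½ ∑_{w ∈ S} x_w`. Since `S` is independent, the vectors `x_w` (`w ∈ S`) have pairwise
disjoint supports, so on the support of `x_v` the vector `x_v - c` is `½ x_v`, on the support of
another `x_w` it is `-½ x_w`, and it vanishes elsewhere. Every `x_w` has sup norm `1` because `w` is
not isolated, hence `‖x_v - c‖ = ½` for each `v ∈ S`.
-/

section DisjointSupport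

variable {ι E : Type*} {S : Finset ι} {y : ι → E → ℝ}

lemma sum_apply_eq_of_disjoint_support
    (hdisj : (S : Set ι).PairwiseDisjoint fun v => Function.support (y v))
    {v : ι} (hv : v ∈ S) {e : E} (he : y v e ≠ 0) :
    ∑ w ∈ S, y w e = y v e :=
  sum_eq_single_of_mem v hv fun w hw hwv => by
    by_contra h
    exact hwv (hdisj.elim_set hw hv e h he)

lemma norm_sum_apply_le_of_disjoint_support [Fintype E]
    (hdisj : (S : Set ι).PairwiseDisjoint fun v => Function.support (y v))
    {r : ℝ} (hr : 0 ≤ r) (hnorm : ∀ v ∈ S, ‖y v‖ ≤ r) (e : E) :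
    ‖∑ w ∈ S, y w e‖ ≤ r := by
  by_cases h : ∃ w ∈ S, y w e ≠ 0
  · obtain ⟨w, hw, hwe⟩ := h
    rw [sum_apply_eq_of_disjoint_support hdisj hw hwe]
    exact (norm_le_pi_norm (y w) e).trans (hnorm w hw)
  · push Not at h
    simpa [sum_eq_zero h] using hr

lemma sub_half_sum_apply_of_ne_zero
    (hdisj : (S : Set ι).PairwiseDisjoint fun v => Function.support (y v))
    {v : ι} (hv : v ∈ S) {e : E} (he : y v e ≠ 0) :
    (y v - (2⁻¹ : ℝ) • ∑ w ∈ S, y w) e = 2⁻¹ * y v e := by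
  rw [Pi.sub_apply, Pi.smul_apply, Finset.sum_apply, sum_apply_eq_of_disjoint_support hdisj hv he,
    smul_eq_mul]
  ring

theorem norm_sub_half_sum_of_disjoint_support [Fintype E]
    (hdisj : (S : Set ι).PairwiseDisjoint fun v => Function.support (y v))
    {r : ℝ} (hnorm : ∀ v ∈ S, ‖y v‖ = r) {v : ι} (hv : v ∈ S) :
    ‖y v - (2⁻¹ : ℝ) • ∑ w ∈ S, y w‖ = r / 2 := by
  have hr : 0 ≤ r := hnorm v hv ▸ norm_nonneg _
  apply le_antisymm
  · refine (pi_norm_le_iff_of_nonneg (by positivity)).2 fun e => ?_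
    by_cases he : y v e = 0
    · have hsum := norm_sum_apply_le_of_disjoint_support hdisj hr (fun w hw => (hnorm w hw).le) e
      rw [Pi.sub_apply, Pi.smul_apply, Finset.sum_apply, he, zero_sub, norm_neg, norm_smul,
        norm_inv, Real.norm_ofNat]
      linarith
    · rw [sub_half_sum_apply_of_ne_zero hdisj hv he, norm_mul, norm_inv, Real.norm_ofNat]
      linarith [norm_le_pi_norm (y v) e, hnorm v hv]
  · suffices r ≤ 2 * ‖y v - (2⁻¹ : ℝ) • ∑ w ∈ S, y w‖ by linarith
    rw [← hnorm v hv]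
    refine (pi_norm_le_iff_of_nonneg (by positivity)).2 fun e => ?_
    by_cases he : y v e = 0
    · simp [he]
    · have := norm_le_pi_norm (y v - (2⁻¹ : ℝ) • ∑ w ∈ S, y w) e
      rw [sub_half_sum_apply_of_ne_zero hdisj hv he, norm_mul, norm_inv, Real.norm_ofNat] at this
      linarith

end DisjointSupport

section SignedIncidence

variable {V E : Type*} [DecidableEq V] (tail head : E → V)

def signedIncidence (v : V) (e : E) : ℝ :=
  if tail e = v then 1 else if head e = v then -1 else 0

lemma signedIncidence_ne_zero_iff {v : V} {e : E} :
    signedIncidence tail head v e ≠ 0 ↔ tail e = v ∨ head e = v := by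
  unfold signedIncidence
  split_ifs <;> simp_all

lemma norm_signedIncidence_apply_le_one (v : V) (e : E) :
    ‖signedIncidence tail head v e‖ ≤ 1 := by
  unfold signedIncidence
  split_ifs <;> norm_num

lemma norm_signedIncidence_eq_one [Fintype E] {v : V} {e : E} (he : tail e = v ∨ head e = v) :
    ‖signedIncidence tail head v‖ = 1 := by
  apply le_antisymm ((pi_norm_le_iff_of_nonneg zero_le_one).2
    (norm_signedIncidence_apply_le_one tail head v))
  calc (1 : ℝ) = ‖signedIncidence tail head v e‖ := by
        unfold signedIncidence
        rcases he with h | h <;> split_ifs <;> simp_all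
    _ ≤ ‖signedIncidence tail head v‖ := norm_le_pi_norm _ e

variable {tail head}

lemma pairwiseDisjoint_support_signedIncidence {G : SimpleGraph V}
    (hadj : ∀ e, G.Adj (tail e) (head e)) {S : Finset V} (hind : ∀ u ∈ S, ∀ v ∈ S, ¬ G.Adj u v) :
    (S : Set V).PairwiseDisjoint fun v => Function.support (signedIncidence tail head v) := by
  intro v hv w hw hvw
  refine Set.disjoint_left.2 fun e hve hwe => ?_
  rw [Function.mem_support, signedIncidence_ne_zero_iff] at hve hwe
  rcases hve with rfl | rfl <;> rcases hwe with h | h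
  · exact hvw h
  · exact hind _ hv _ hw (h ▸ hadj e)
  · exact hind _ hw _ hv (h ▸ hadj e)
  · exact hvw h

end SignedIncidence

theorem linf_median_of_independent_set_general
    {V E : Type*} [DecidableEq V] [Fintype E]
    (G : SimpleGraph V)
    (hiso : ∀ v : V, ∃ u : V, G.Adj v u)
    (tail head : E → V)
    (hadj : ∀ e : E, G.Adj (tail e) (head e))
    (hsurj : ∀ u v : V, G.Adj u v → ∃ e : E, (s(tail e, head e) : Sym2 V) = s(u, v))
    (x : V → E → ℝ)
    (hx : ∀ (v : V) (e : E),
      x v e = if tail e = v then 1 else if head e = v then -1 else 0)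
    (S : Finset V)
    (hind : ∀ u ∈ S, ∀ v ∈ S, ¬ G.Adj u v)
    (m : ℕ) (hS : S.card = m) :
    ∃ c : E → ℝ, ∑ v ∈ S, ‖x v - c‖ = (m : ℝ) / 2 := by
  obtain rfl : x = signedIncidence tail head := funext fun v => funext (hx v)
  have hnorm : ∀ v ∈ S, ‖signedIncidence tail head v‖ = 1 := fun v _ => by
    obtain ⟨u, hu⟩ := hiso v
    obtain ⟨e, he⟩ := hsurj v u hu
    have hve : v = tail e ∨ v = head e := Sym2.mem_iff.1 (he ▸ Sym2.mem_mk_left v u)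
    exact norm_signedIncidence_eq_one tail head (hve.imp Eq.symm Eq.symm)
  refine ⟨(2⁻¹ : ℝ) • ∑ w ∈ S, signedIncidence tail head w, ?_⟩
  rw [sum_congr rfl fun v hv => norm_sub_half_sum_of_disjoint_support
    (pairwiseDisjoint_support_signedIncidence hadj hind) hnorm hv, sum_const, hS,
    nsmul_eq_mul]
  ring

/-- If `S` is a nonempty independent set in `G` with `|S| = m`, then
there is a point `c` with `Σ_{v∈S} ‖x_v − c‖_∞ = m/2`. -/
theorem linf_median_of_independent_set
    {V E : Type*} [Fintype V] [DecidableEq V] [Fintype E] [DecidableEq E]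
    (G : SimpleGraph V) [DecidableRel G.Adj]
    (hiso : ∀ v : V, ∃ u : V, G.Adj v u)
    (tail head : E → V)
    (hadj : ∀ e : E, G.Adj (tail e) (head e))
    (hinj : ∀ e₁ e₂ : E,
      (s(tail e₁, head e₁) : Sym2 V) = s(tail e₂, head e₂) → e₁ = e₂)
    (hsurj : ∀ u v : V, G.Adj u v → ∃ e : E, (s(tail e, head e) : Sym2 V) = s(u, v))
    (x : V → E → ℝ)
    (hx : ∀ (v : V) (e : E),
      x v e = if tail e = v then 1 else if head e = v then -1 else 0)
    (S : Finset V) (hne : S.Nonempty)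
    (hind : ∀ u ∈ S, ∀ v ∈ S, ¬ G.Adj u v)
    (m : ℕ) (hS : S.card = m) :
    ∃ c : E → ℝ, ∑ v ∈ S, ‖x v - c‖ = (m : ℝ) / 2 :=
  linf_median_of_independent_set_general G hiso tail head hadj hsurj x hx S hind m hS
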